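/- arXiv:2107.03598 — 6 statements merged into one kernel-verified Lean document; each statement's English description precedes it below -/
import Mathlib

section
/- Let R be a commutative ring and A an associative unital R-algebra that is finite and free as an R-module. Let P be a left A-module admitting a finite A-basis c₁, …, cₘ (so that P is also finite and free as an R-module). Then for every A-linear endomorphism f of P, the trace of f regarded as an R-linear endomorphism of P equals the trace of the R-linear endomorphism of A given by right multiplication by the element ∑ᵢ cᵢ*(f(cᵢ)) ∈ A, where cᵢ* : P → A denotes the i-th coordinate function of the basis (cᵢ). -/
/-!
Choose an `R`-basis `b` of `A`; then the `bⱼ • cᵢ` form an `R`-basis of `P`. Since `f` is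
`A`-linear, `f (bⱼ • cᵢ) = ∑ₖ bⱼ cₖ*(f cᵢ) • cₖ`, so the `(j, i)` diagonal entry of `f` is the
`j`-th diagonal entry of right multiplication by `cᵢ*(f cᵢ)` on `A`. Summing over `j` and then
over `i` gives the claim, since `a ↦ mulRight R a` is additive.
-/

open LinearMap Module

theorem LinearMap.mulRight_sum {R A α : Type*} [Semiring R] [NonUnitalNonAssocSemiring A]
    [Module R A] [IsScalarTower R A A] (s : Finset α) (a : α → A) :
    mulRight R (∑ i ∈ s, a i) = ∑ i ∈ s, mulRight R (a i) := by
  ext x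
  simp only [mulRight_apply, Finset.mul_sum, sum_apply]

section

variable {R A P ι : Type*} [CommRing R] [Ring A] [Algebra R A]
  [AddCommGroup P] [Module A P] [Module R P] [IsScalarTower R A P] [Fintype ι]

theorem LinearMap.toMatrix_restrictScalars_smulTower_diag {κ : Type*} [Fintype κ]
    [DecidableEq ι] [DecidableEq κ] (b : Basis κ R A) (c : Basis ι A P) (f : P →ₗ[A] P)
    (j : κ) (i : ι) :
    (f.restrictScalars R).toMatrix (b.smulTower c) (b.smulTower c) (j, i) (j, i) =
      (mulRight R (c.repr (f (c i)) i)).toMatrix b b j j := by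
  simp only [toMatrix_apply, Basis.smulTower_apply, Basis.smulTower_repr, restrictScalars_apply,
    map_smul, Finsupp.smul_apply, smul_eq_mul, mulRight_apply]

theorem LinearMap.trace_restrictScalars_eq_sum_trace_mulRight [Module.Finite R A]
    [Module.Free R A] (c : Basis ι A P) (f : P →ₗ[A] P) :
    trace R P (f.restrictScalars R) = ∑ i, trace R A (mulRight R (c.repr (f (c i)) i)) := by
  classical
  let b := Free.chooseBasis R A
  rw [trace_eq_matrix_trace R (b.smulTower c), Matrix.trace, Fintype.sum_prod_type, Finset.sum_comm]
  refine Finset.sum_congr rfl fun i _ ↦ ?_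
  simp only [trace_eq_matrix_trace R b, Matrix.trace, Matrix.diag,
    toMatrix_restrictScalars_smulTower_diag]

end

/-- **Hattori–Stallings trace compatibility (free case).**
Let `R` be a commutative ring, `A` an `R`-algebra that is finite free as an `R`-module,
and `P` a left `A`-module with a finite `A`-basis `c`.  For every `A`-linear endomorphism
`f` of `P`, the trace of `f` as an `R`-linear endomorphism of `P` equals the trace of the
`R`-linear endomorphism of `A` given by right multiplication by `∑ i, cᵢ*(f (cᵢ))`. -/
theorem stmt0 {R A P ι : Type*} [CommRing R] [Ring A] [Algebra R A]
    [AddCommGroup P] [Module A P] [Module R P] [IsScalarTower R A P]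
    [Module.Finite R A] [Module.Free R A]
    [Fintype ι] (c : Module.Basis ι A P) (f : P →ₗ[A] P) :
    LinearMap.trace R P (f.restrictScalars R) =
      LinearMap.trace R A (LinearMap.mulRight R (∑ i, c.repr (f (c i)) i)) := by
  rw [trace_restrictScalars_eq_sum_trace_mulRight c f, mulRight_sum, map_sum]
end

section
/- Let R be a commutative ring, A an associative unital R-algebra, and (θ; x₁, …, xₙ; y₁, …, yₙ) a Frobenius system for A over R such that (x₁, …, xₙ) is an R-basis of A. Let μ be an R-algebra automorphism of A satisfying θ(c·a) = θ(μ(a)·c) for all a, c ∈ A (a Nakayama automorphism), and set ω := ∑ᵢ μ(xᵢ)·yᵢ (the different of A over R). Then the Hattori–Stallings trace tr : A → R, defined by tr(a) = ∑ᵢ θ(yᵢ·a·xᵢ), satisfies tr(a) = θ(ω·a) for all a ∈ A. -/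
theorem stmt3_general {R A : Type*} [CommRing R] [Ring A] [Algebra R A]
    {n : ℕ} (θ : A →ₗ[R] R) (x y : Fin n → A)
    (μ : A ≃ₐ[R] A) (hμ : ∀ a c : A, θ (c * a) = θ (μ a * c)) :
    ∀ a : A, ∑ i, θ (y i * a * x i) = θ ((∑ i, μ (x i) * y i) * a) := by
  intro a
  rw [Finset.sum_mul, map_sum]
  exact Finset.sum_congr rfl fun i _ => by rw [hμ (x i) (y i * a), mul_assoc]

/-- **The Hattori–Stallings trace of a free Frobenius algebra is `θ · ω` where `ω` is the
different.** If `(θ; x; y)` is a Frobenius system for the `R`-algebra `A` with `x` an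
`R`-basis, and `μ` is a Nakayama automorphism (`θ (c * a) = θ (μ a * c)`), then with
`ω := ∑ i, μ (xᵢ) * yᵢ` one has `∑ i, θ (yᵢ * a * xᵢ) = θ (ω * a)` for all `a`. -/
theorem stmt3 {R A : Type*} [CommRing R] [Ring A] [Algebra R A]
    {n : ℕ} (θ : A →ₗ[R] R) (x y : Fin n → A)
    (h1 : ∀ a : A, ∑ i, θ (y i * a) • x i = a)
    (h2 : ∀ a : A, ∑ i, θ (a * x i) • y i = a)
    (b : Module.Basis (Fin n) R A) (hb : ∀ i, b i = x i)
    (μ : A ≃ₐ[R] A) (hμ : ∀ a c : A, θ (c * a) = θ (μ a * c)) :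
    ∀ a : A, ∑ i, θ (y i * a * x i) = θ ((∑ i, μ (x i) * y i) * a) :=
  stmt3_general θ x y μ hμ
end

section
/- Let R be a commutative ring, A an associative unital R-algebra, and (θ; x₁, …, xₙ; y₁, …, yₙ) a Frobenius system for A over R such that (x₁, …, xₙ) is an R-basis of A. Let μ be an R-algebra automorphism of A satisfying θ(c·a) = θ(μ(a)·c) for all a, c ∈ A, set ω := ∑ᵢ μ(xᵢ)·yᵢ, and define tr : A → R by tr(a) = ∑ᵢ θ(yᵢ·a·xᵢ). Then there is a unit u ∈ R^× such that det([tr(xᵢ·xⱼ)]ᵢ,ⱼ) = u · det(ω_L), where ω_L denotes the R-linear endomorphism of A given by left multiplication by ω and det(ω_L) is its determinant (the norm of ω). In other words, the discriminant of A over R with respect to tr equals the norm of the different, up to a unit of R. -/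
/-!
By the Nakayama relation, `tr a = ∑ₖ θ (yₖ a xₖ) = θ (μ a · ω)`, hence
`tr (xᵢ xⱼ) = θ (μ xⱼ · ω xᵢ)`. Expanding `ω xᵢ` in the basis `x` factors the trace matrix as
`Lᵀ G`, where `L` is the matrix of left multiplication by `ω` and `G = [θ (xₖ xⱼ)]`. The dual
basis property of `y` makes `[θ (yⱼ yᵢ)]` a right inverse of `G`, so `det G` is a unit.
-/

open Matrix

section FrobeniusSystem

variable {R A ι : Type*} [CommRing R] [Ring A] [Algebra R A] [Fintype ι] (θ : A →ₗ[R] R)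

theorem sum_apply_mul_mul_eq_apply_mul_sum {F : Type*} [FunLike F A A] [MulHomClass F A A]
    (x y : ι → A) (μ : F) (hμ : ∀ a c : A, θ (c * a) = θ (μ a * c)) (a : A) :
    ∑ k, θ (y k * a * x k) = θ (μ a * ∑ k, μ (x k) * y k) := by
  simp only [Finset.mul_sum, map_sum, mul_assoc, hμ _ (y _), map_mul]

theorem traceMatrix_eq_transpose_toMatrix_mul [DecidableEq ι] {F : Type*} [FunLike F A A]
    [MulHomClass F A A] (b : Module.Basis ι R A) (y : ι → A) (μ : F)
    (hμ : ∀ a c : A, θ (c * a) = θ (μ a * c)) :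
    (of fun i j => ∑ k, θ (y k * (b i * b j) * b k)) =
      (LinearMap.toMatrix b b (LinearMap.mulLeft R (∑ k, μ (b k) * y k)))ᵀ *
        of fun k j => θ (b k * b j) := by
  set ω := ∑ k, μ (b k) * y k
  ext i j
  calc ∑ k, θ (y k * (b i * b j) * b k)
      = θ (μ (b j) * ω * b i) := by
        rw [sum_apply_mul_mul_eq_apply_mul_sum θ b y μ hμ, hμ (b i), map_mul μ, mul_assoc]
    _ = θ (μ (b j) * ∑ k, b.repr (ω * b i) k • b k) := by rw [b.sum_repr, mul_assoc]
    _ = ∑ k, b.repr (ω * b i) k * θ (b k * b j) := by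
        simp only [Finset.mul_sum, mul_smul_comm, map_sum, map_smul, smul_eq_mul, hμ (b j)]
    _ = _ := by simp only [mul_apply, transpose_apply, LinearMap.toMatrix_apply,
        LinearMap.mulLeft_apply, of_apply]

theorem isUnit_det_of_frobeniusSystem [DecidableEq ι] (b : Module.Basis ι R A) (y : ι → A)
    (h1 : ∀ a : A, ∑ i, θ (y i * a) • b i = a) (h2 : ∀ a : A, ∑ i, θ (a * b i) • y i = a) :
    IsUnit (of fun k j => θ (b k * b j)).det := by
  have hdual : ∀ k m, θ (y m * b k) = (1 : Matrix ι ι R) k m := by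
    intro k m
    have := congrFun (b.repr_sum_self fun i => θ (y i * b k)) m
    rwa [h1, b.repr_self_apply, eq_comm] at this
  refine isUnit_det_of_right_inverse (B := of fun i m => θ (y m * y i)) (ext fun k m => ?_)
  calc ∑ i, θ (b k * b i) * θ (y m * y i)
      = θ (y m * ∑ i, θ (b k * b i) • y i) := by
        simp only [Finset.mul_sum, mul_smul_comm, map_sum, map_smul, smul_eq_mul]
    _ = _ := by rw [h2, hdual]

end FrobeniusSystem

/-- **Discriminant of a free Frobenius algebra = norm of the different, up to a unit.**
If `(θ; x; y)` is a Frobenius system for the `R`-algebra `A` with `x` an `R`-basis, `μ`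
is a Nakayama automorphism, `ω := ∑ i, μ (xᵢ) * yᵢ`, and `tr a := ∑ i, θ (yᵢ * a * xᵢ)`,
then `det [tr (xᵢ * xⱼ)] = u * det (ω_L)` for some unit `u` of `R`, where `ω_L` is the
`R`-linear endomorphism of `A` given by left multiplication by `ω`. -/
theorem stmt4 {R A : Type*} [CommRing R] [Ring A] [Algebra R A]
    {n : ℕ} (θ : A →ₗ[R] R) (x y : Fin n → A)
    (h1 : ∀ a : A, ∑ i, θ (y i * a) • x i = a)
    (h2 : ∀ a : A, ∑ i, θ (a * x i) • y i = a)
    (b : Module.Basis (Fin n) R A) (hb : ∀ i, b i = x i)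
    (μ : A ≃ₐ[R] A) (hμ : ∀ a c : A, θ (c * a) = θ (μ a * c)) :
    ∃ u : Rˣ,
      (Matrix.of fun i j : Fin n => ∑ k, θ (y k * (x i * x j) * x k)).det =
        (u : R) * LinearMap.det (LinearMap.mulLeft R (∑ i, μ (x i) * y i)) := by
  obtain rfl : ⇑b = x := funext hb
  obtain ⟨u, hu⟩ := isUnit_det_of_frobeniusSystem θ b y h1 h2
  refine ⟨u, ?_⟩
  rw [traceMatrix_eq_transpose_toMatrix_mul θ b y μ hμ, det_mul, det_transpose,
    LinearMap.det_toMatrix, hu, mul_comm]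
end

section
/- Let R be a commutative ring, A an associative unital R-algebra, and (θ; x₁, …, xₙ; y₁, …, yₙ) a Frobenius system for A over R such that (x₁, …, xₙ) is an R-basis of A. Let μ be an R-algebra automorphism of A satisfying θ(c·a) = θ(μ(a)·c) for all a, c ∈ A, and set ω := ∑ᵢ μ(xᵢ)·yᵢ. Then ω is a μ-normal element of A: μ(a)·ω = ω·a for every a ∈ A. -/
open TensorProduct

/-- The Casimir element `∑ i, x i ⊗ y i` of a Frobenius system commutes with `A` in the
`A`-bimodule `A ⊗[R] A`. -/
theorem sum_mul_tmul_eq_sum_tmul_mul {R A : Type*} [CommRing R] [Ring A] [Algebra R A]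
    {n : ℕ} (θ : A →ₗ[R] R) (x y : Fin n → A)
    (h1 : ∀ a : A, ∑ i, θ (y i * a) • x i = a)
    (h2 : ∀ a : A, ∑ i, θ (a * x i) • y i = a) (a : A) :
    ∑ j, (a * x j) ⊗ₜ[R] y j = ∑ i, x i ⊗ₜ[R] (y i * a) :=
  calc ∑ j, (a * x j) ⊗ₜ[R] y j
      = ∑ j, (∑ i, θ (y i * (a * x j)) • x i) ⊗ₜ[R] y j := by simp only [h1]
    _ = ∑ i, ∑ j, θ (y i * a * x j) • (x i ⊗ₜ[R] y j) := by
        simp only [sum_tmul, smul_tmul', mul_assoc]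
        exact Finset.sum_comm
    _ = ∑ i, x i ⊗ₜ[R] (∑ j, θ (y i * a * x j) • y j) := by
        simp only [tmul_sum, tmul_smul]
    _ = ∑ i, x i ⊗ₜ[R] (y i * a) := by simp only [h2]

theorem stmt5_general {R A : Type*} [CommRing R] [Ring A] [Algebra R A]
    {n : ℕ} (θ : A →ₗ[R] R) (x y : Fin n → A)
    (h1 : ∀ a : A, ∑ i, θ (y i * a) • x i = a)
    (h2 : ∀ a : A, ∑ i, θ (a * x i) • y i = a)
    (μ : A ≃ₐ[R] A) :
    ∀ a : A, μ a * (∑ i, μ (x i) * y i) = (∑ i, μ (x i) * y i) * a := by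
  intro a
  have key := congrArg (lift (LinearMap.mul R A ∘ₗ μ.toLinearMap))
    (sum_mul_tmul_eq_sum_tmul_mul θ x y h1 h2 a)
  simpa only [map_sum, lift.tmul, LinearMap.comp_apply, LinearMap.mul_apply',
    AlgEquiv.toLinearMap_apply, map_mul, mul_assoc, Finset.mul_sum, Finset.sum_mul] using key

/-- **The different is a `μ`-normal element.** If `(θ; x; y)` is a Frobenius system for
the `R`-algebra `A` with `x` an `R`-basis and `μ` is a Nakayama automorphism
(`θ (c * a) = θ (μ a * c)`), then `ω := ∑ i, μ (xᵢ) * yᵢ` satisfies `μ a * ω = ω * a`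
for every `a ∈ A`. -/
theorem stmt5 {R A : Type*} [CommRing R] [Ring A] [Algebra R A]
    {n : ℕ} (θ : A →ₗ[R] R) (x y : Fin n → A)
    (h1 : ∀ a : A, ∑ i, θ (y i * a) • x i = a)
    (h2 : ∀ a : A, ∑ i, θ (a * x i) • y i = a)
    (b : Module.Basis (Fin n) R A) (hb : ∀ i, b i = x i)
    (μ : A ≃ₐ[R] A) (hμ : ∀ a c : A, θ (c * a) = θ (μ a * c)) :
    ∀ a : A, μ a * (∑ i, μ (x i) * y i) = (∑ i, μ (x i) * y i) * a :=
  stmt5_general θ x y h1 h2 μ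
end

section
/- Let R be a commutative ring, A an associative unital R-algebra with a Frobenius system (θ; x₁, …, xₙ; y₁, …, yₙ), and S a commutative R-algebra. Let θ_S : S ⊗_R A → S be the S-linear base change of θ, determined by s ⊗ a ↦ s·θ(a) (using the identification S ⊗_R R ≅ S). Then (θ_S; 1⊗x₁, …, 1⊗xₙ; 1⊗y₁, …, 1⊗yₙ) is a Frobenius system for the S-algebra S ⊗_R A over S; that is, for every z ∈ S ⊗_R A one has ∑ᵢ θ_S((1⊗yᵢ)·z) • (1⊗xᵢ) = z and ∑ᵢ θ_S(z·(1⊗xᵢ)) • (1⊗yᵢ) = z. -/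
open TensorProduct

/-- **Base change of a Frobenius algebra.** If `(θ; x; y)` is a Frobenius system for the
`R`-algebra `A` and `S` is a commutative `R`-algebra, then the base-changed map
`θ_S : S ⊗[R] A → S`, `s ⊗ a ↦ s · θ(a)`, together with the elements `1 ⊗ xᵢ`, `1 ⊗ yᵢ`,
is a Frobenius system for the `S`-algebra `S ⊗[R] A`. -/
theorem stmt6 {R A S : Type*} [CommRing R] [Ring A] [Algebra R A]
    [CommRing S] [Algebra R S]
    {n : ℕ} (θ : A →ₗ[R] R) (x y : Fin n → A)
    (h1 : ∀ a : A, ∑ i, θ (y i * a) • x i = a)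
    (h2 : ∀ a : A, ∑ i, θ (a * x i) • y i = a)
    (θS : S ⊗[R] A →ₗ[S] S)
    (hθS : ∀ (s : S) (a : A), θS (s ⊗ₜ[R] a) = θ a • s) :
    ∀ z : S ⊗[R] A,
      (∑ i, θS (((1 : S) ⊗ₜ[R] y i) * z) • ((1 : S) ⊗ₜ[R] x i) = z) ∧
      (∑ i, θS (z * ((1 : S) ⊗ₜ[R] x i)) • ((1 : S) ⊗ₜ[R] y i) = z) := by
  intro z
  induction z using TensorProduct.induction_on with
  | zero => simp
  | tmul s a =>
    constructor
    · calc ∑ i, θS (((1 : S) ⊗ₜ[R] y i) * s ⊗ₜ[R] a) • ((1 : S) ⊗ₜ[R] x i)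
          = ∑ i, s ⊗ₜ[R] (θ (y i * a) • x i) := by
            refine Finset.sum_congr rfl fun i _ => ?_
            rw [Algebra.TensorProduct.tmul_mul_tmul, one_mul, hθS,
              TensorProduct.smul_tmul', smul_eq_mul, mul_one,
              TensorProduct.smul_tmul]
        _ = s ⊗ₜ[R] a := by rw [← TensorProduct.tmul_sum, h1]
    · calc ∑ i, θS ((s ⊗ₜ[R] a) * ((1 : S) ⊗ₜ[R] x i)) • ((1 : S) ⊗ₜ[R] y i)
          = ∑ i, s ⊗ₜ[R] (θ (a * x i) • y i) := by
            refine Finset.sum_congr rfl fun i _ => ?_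
            rw [Algebra.TensorProduct.tmul_mul_tmul, mul_one, hθS,
              TensorProduct.smul_tmul', smul_eq_mul, mul_one,
              TensorProduct.smul_tmul]
        _ = s ⊗ₜ[R] a := by rw [← TensorProduct.tmul_sum, h2]
  | add u v hu hv =>
    constructor
    · simp only [mul_add, add_mul, map_add, add_smul, Finset.sum_add_distrib, hu.1, hv.1]
    · simp only [mul_add, add_mul, map_add, add_smul, Finset.sum_add_distrib, hu.2, hv.2]
end

section
/- Let k be a field and H a Hopf algebra over k whose antipode S is bijective. Let t ∈ H be a right integral (t·h = ε(h)·t for all h ∈ H), and let α : H → k be a left integral of the dual (∑ h₁·α(h₂) = α(h)·1_H for all h ∈ H) with α(t) = 1. Then for every h ∈ H, ∑ S(t₁)·α(t₂·h) = h; more precisely, applying to Δ(t) the linear map H ⊗ H → H induced by the bilinear map (a, b) ↦ α(b·h) • S(a) yields exactly h. -/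
/-!
For a right integral `t`, moving `g` across `Δ t` gives `t₁ g ⊗ t₂ = t₁ ⊗ t₂ S(g)`: multiply
`g ⊗ 1 = ∑ Δ(g₁) (1 ⊗ S g₂)` on the left by `Δ t` and use `Δ t Δ(g₁) = Δ(t g₁) = ε(g₁) Δ t`.
Writing `h = S g` (surjectivity of `S`), the sum becomes `∑ S(t₁ g) α(t₂) = S(α(t) g) = S g`,
where `∑ t₁ α(t₂) = α(t) 1` is the integral property of `α`.
-/

open TensorProduct HopfAlgebra Coalgebra

section

variable {R M N P : Type*} [CommSemiring R] [AddCommMonoid M] [AddCommMonoid N]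
  [AddCommMonoid P] [Module R M] [Module R N] [Module R P]

lemma TensorProduct.rid_lTensor_rTensor_apply (f : M →ₗ[R] P) (φ : N →ₗ[R] R) (x : M ⊗[R] N) :
    TensorProduct.rid R P (φ.lTensor P (f.rTensor N x))
      = f (TensorProduct.rid R M (φ.lTensor M x)) := by
  induction x using TensorProduct.induction_on with
  | zero => simp
  | tmul m n => simp
  | add x y hx hy => simp [hx, hy]

end

namespace HopfAlgebra

variable {R A : Type*} [CommSemiring R] [Semiring A] [HopfAlgebra R A]

lemma sum_comul_mul_one_tmul_antipode {a : A} {ι : Type*} (𝓡 : Repr R a ι) :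
    ∑ i ∈ 𝓡.index, comul (R := R) (𝓡.left i) * (1 ⊗ₜ antipode R (𝓡.right i)) = a ⊗ₜ[R] 1 := by
  set f : A ⊗[R] (A ⊗[R] A) →ₗ[R] A ⊗[R] A :=
    (LinearMap.mul' R A ∘ₗ (antipode R).lTensor A).lTensor A
  have hf : ∀ (u : A ⊗[R] A) (c : A),
      f (TensorProduct.assoc R A A A (u ⊗ₜ c)) = u * (1 ⊗ₜ antipode R c) := by
    intro u c
    induction u using TensorProduct.induction_on with
    | zero => simp
    | tmul x y => simp [f, Algebra.TensorProduct.tmul_mul_tmul]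
    | add x y hx hy => simp only [add_tmul, map_add, hx, hy, add_mul]
  calc ∑ i ∈ 𝓡.index, comul (R := R) (𝓡.left i) * (1 ⊗ₜ antipode R (𝓡.right i))
      = f (TensorProduct.assoc R A A A (comul.rTensor A (comul a))) := by
        simp only [← 𝓡.eq, map_sum, LinearMap.rTensor_tmul, hf]
    _ = (Algebra.linearMap R A ∘ₗ counit).lTensor A (comul a) := by
        rw [coassoc_apply, ← LinearMap.lTensor_comp_apply, LinearMap.comp_assoc,
          mul_antipode_lTensor_comul]
    _ = a ⊗ₜ[R] 1 := by
        rw [LinearMap.lTensor_comp_apply, lTensor_counit_comul]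
        simp

lemma comul_mul_tmul_one_eq_comul_mul_one_tmul_antipode {t : A}
    (ht : ∀ h : A, t * h = counit (R := R) h • t) (g : A) :
    comul (R := R) t * (g ⊗ₜ 1) = comul t * (1 ⊗ₜ antipode R g) :=
  calc comul (R := R) t * (g ⊗ₜ 1)
      = ∑ i ∈ (ℛ R g).index, comul (t * (ℛ R g).left i) * (1 ⊗ₜ antipode R ((ℛ R g).right i)) := by
        simp only [← sum_comul_mul_one_tmul_antipode (ℛ R g), Finset.mul_sum, Bialgebra.comul_mul,
          mul_assoc]
    _ = comul t * (1 ⊗ₜ antipode R (∑ i ∈ (ℛ R g).index,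
          counit (R := R) ((ℛ R g).left i) • (ℛ R g).right i)) := by
        simp only [ht, map_smul, smul_mul_assoc, map_sum, tmul_sum, tmul_smul, Finset.mul_sum,
          mul_smul_comm]
    _ = comul t * (1 ⊗ₜ antipode R g) := by rw [sum_counit_smul]

lemma rid_lTensor_map_antipode_mulRight_antipode_comul {t : A}
    (ht : ∀ h : A, t * h = counit (R := R) h • t) (φ : A →ₗ[R] R) (g : A) :
    TensorProduct.rid R A (φ.lTensor A
        (map (antipode R) (LinearMap.mulRight R (antipode R g)) (comul t)))
      = antipode R (TensorProduct.rid R A (φ.lTensor A (comul t)) * g) := by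
  have hmul : ∀ (u : A ⊗[R] A) (a b : A),
      u * (a ⊗ₜ b) = map (LinearMap.mulRight R a) (LinearMap.mulRight R b) u := fun u a b => by
    rw [← LinearMap.mulRight_tmul, LinearMap.mulRight_apply]
  have hswap : map (antipode R) (LinearMap.mulRight R (antipode R g)) (comul t)
      = (antipode R ∘ₗ LinearMap.mulRight R g).rTensor A (comul t) := by
    calc map (antipode R) (LinearMap.mulRight R (antipode R g)) (comul t)
        = (antipode R).rTensor A (comul (R := R) t * (1 ⊗ₜ antipode R g)) := by
          rw [hmul, LinearMap.mulRight_one, ← LinearMap.comp_apply (LinearMap.rTensor A _),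
            LinearMap.rTensor_comp_map, LinearMap.comp_id]
      _ = (antipode R).rTensor A (comul (R := R) t * (g ⊗ₜ 1)) := by
          rw [comul_mul_tmul_one_eq_comul_mul_one_tmul_antipode ht]
      _ = (antipode R ∘ₗ LinearMap.mulRight R g).rTensor A (comul t) := by
          rw [hmul, LinearMap.mulRight_one, ← LinearMap.comp_apply (LinearMap.rTensor A _),
            LinearMap.rTensor_comp_map, LinearMap.rTensor]
  rw [hswap, rid_lTensor_rTensor_apply, LinearMap.comp_apply, LinearMap.mulRight_apply]

end HopfAlgebra

/-- **The identity `h = ∑ S(t₁) · α(t₂ · h)`.** Let `H` be a Hopf algebra over a field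
`k` with bijective antipode `S`, `t ∈ H` a right integral (`t * h = ε(h) • t`), and
`α : H → k` a left integral of the dual (`∑ h₁ · α(h₂) = α(h) • 1`) with `α t = 1`.
Then for every `h ∈ H`, applying to `Δ t` the linear map `H ⊗ H → H` induced by the
bilinear map `(a, b) ↦ α (b * h) • S a` yields `h`; concretely,
`rid ((lTensor α) ((S ⊗ (·* h)) (Δ t))) = h`. -/
theorem stmt11 {k H : Type*} [Field k] [Ring H] [HopfAlgebra k H]
    (hS : Function.Bijective (antipode (R := k) (A := H)))
    (t : H) (ht : ∀ h : H, t * h = counit (R := k) h • t)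
    (α : H →ₗ[k] k)
    (hα : ∀ h : H,
      TensorProduct.rid k H ((LinearMap.lTensor H α) (comul (R := k) h)) = α h • (1 : H))
    (hαt : α t = 1) :
    ∀ h : H,
      TensorProduct.rid k H ((LinearMap.lTensor H α)
        ((TensorProduct.map (antipode (R := k)) (LinearMap.mulRight k h))
          (comul (R := k) t))) = h := by
  intro h
  obtain ⟨g, rfl⟩ := hS.surjective h
  rw [rid_lTensor_map_antipode_mulRight_antipode_comul ht, hα, hαt, one_smul, one_mul]
end
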